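/- Let R be a unital associative ℝ-algebra, let a, τ, q ∈ ℝ, and let w, v ∈ R satisfy the C_{L,a}-relations: w²v = a•w − q•(v w²) + τ•(w v w) and w v² = a•v − q•(v² w) + τ•(v w v). Set d = w·v and d̃ = v·w, and define 𝕃̂ : R × R → R × R by 𝕃̂(x, y) = (τ•x − q•y + a•1, x). Then for all natural numbers n, i, j, writing (Xₙ, Yₙ) = 𝕃̂^[n](d, d̃), one has wⁿ · dⁱ · d̃ʲ = Xₙⁱ · Yₙʲ · wⁿ and dⁱ · d̃ʲ · vⁿ = vⁿ · Xₙⁱ · Yₙʲ. -/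

import Mathlib

/-!
In `R × R`, the defining relations of `C_{L,a}` say exactly that `(w, w)` semiconjugates
`(d, d̃)` to `𝕃̂ (d, d̃)` and that `(v, v)` semiconjugates `𝕃̂ (d, d̃)` back to `(d, d̃)`.
Semiconjugation by a fixed element is preserved by the affine map `𝕃̂`, so by induction
`wⁿ` semiconjugates `(d, d̃)` to `𝕃̂ⁿ (d, d̃)` and `vⁿ` semiconjugates `𝕃̂ⁿ (d, d̃)` back
to `(d, d̃)`; monomials in the components are then carried along.
-/

section Iterate

variable {M : Type*} [Monoid M] {a : M} {f : M → M}

theorem SemiconjBy.pow_iterate (hf : ∀ y z, SemiconjBy a y z → SemiconjBy a (f y) (f z)) :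
    ∀ (n : ℕ) (x : M), SemiconjBy a x (f x) → SemiconjBy (a ^ n) x (f^[n] x)
  | 0, x, _ => by rw [pow_zero]; exact SemiconjBy.one_left x
  | n + 1, x, hx => by
    rw [pow_succ, Function.iterate_succ_apply]
    exact (pow_iterate hf n (f x) (hf _ _ hx)).mul_left hx

theorem SemiconjBy.pow_iterate_left (hf : ∀ y z, SemiconjBy a y z → SemiconjBy a (f y) (f z)) :
    ∀ (n : ℕ) (x : M), SemiconjBy a (f x) x → SemiconjBy (a ^ n) (f^[n] x) x
  | 0, x, _ => by rw [pow_zero]; exact SemiconjBy.one_left x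
  | n + 1, x, hx => by
    rw [pow_succ', Function.iterate_succ_apply]
    exact hx.mul_left (pow_iterate_left hf n (f x) (hf _ _ hx))

end Iterate

section AffineShift

variable {K R : Type*} [CommRing K] [Ring R] [Algebra K R]

/-- The map `𝕃̂` of the paper. -/
def affineShift (τ q a : K) (p : R × R) : R × R :=
  (τ • p.1 - q • p.2 + a • 1, p.1)

theorem SemiconjBy.affineShift {c : R} {p p' : R × R} (h : SemiconjBy (c, c) p p') (τ q a : K) :
    SemiconjBy (c, c) (affineShift τ q a p) (affineShift τ q a p') := by
  obtain ⟨h₁, h₂⟩ := Prod.semiconjBy_iff.1 h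
  refine Prod.semiconjBy_iff.2 ⟨?_, h₁⟩
  exact ((h₁.smul_right τ).sub_right (h₂.smul_right q)).add_right
    ((SemiconjBy.one_right c).smul_right a)

theorem SemiconjBy.monomial {c : R} {p p' : R × R} (h : SemiconjBy (c, c) p p') (i j : ℕ) :
    SemiconjBy c (p.1 ^ i * p.2 ^ j) (p'.1 ^ i * p'.2 ^ j) := by
  obtain ⟨h₁, h₂⟩ := Prod.semiconjBy_iff.1 h
  exact (h₁.pow_right i).mul_right (h₂.pow_right j)

variable {τ q a : K} {w v : R}

theorem semiconjBy_affineShift_of_sq_mul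
    (h : w * w * v = a • w - q • (v * w * w) + τ • (w * v * w)) :
    SemiconjBy (w, w) (w * v, v * w) (affineShift τ q a (w * v, v * w)) := by
  refine Prod.semiconjBy_iff.2 ⟨?_, (mul_assoc w v w).symm⟩
  simp only [SemiconjBy, affineShift, ← mul_assoc, h, add_mul, sub_mul, smul_mul_assoc, one_mul]
  abel

theorem semiconjBy_affineShift_of_mul_sq
    (h : w * v * v = a • v - q • (v * v * w) + τ • (v * w * v)) :
    SemiconjBy (v, v) (affineShift τ q a (w * v, v * w)) (w * v, v * w) := by
  refine Prod.semiconjBy_iff.2 ⟨?_, (mul_assoc v w v).symm⟩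
  simp only [SemiconjBy, affineShift, h, mul_add, mul_sub, mul_smul_comm, mul_one, ← mul_assoc]
  abel

end AffineShift

/-- reordering formula in `C_{L,a}` for monomials `p(x,y) = xⁱ yʲ`:
`wⁿ dⁱ d'ʲ = Xₙⁱ Yₙʲ wⁿ` and `dⁱ d'ʲ vⁿ = vⁿ Xₙⁱ Yₙʲ` where `(Xₙ, Yₙ) = 𝕃̂^[n](d, d')`.
Here `d = w v` and `d'` denotes d̃ = v w. -/
theorem stmt_3 (R : Type*) [Ring R] [Algebra ℝ R]
    (a τ q : ℝ) (w v : R)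
    (h1 : w * w * v = a • w - q • (v * w * w) + τ • (w * v * w))
    (h2 : w * v * v = a • v - q • (v * v * w) + τ • (v * w * v))
    (d d' : R) (hd : d = w * v) (hd' : d' = v * w)
    (L : R × R → R × R)
    (hL : L = fun p => (τ • p.1 - q • p.2 + a • (1 : R), p.1)) :
    ∀ n i j : ℕ,
      w ^ n * d ^ i * d' ^ j = (L^[n] (d, d')).1 ^ i * (L^[n] (d, d')).2 ^ j * w ^ n ∧
      d ^ i * d' ^ j * v ^ n = v ^ n * ((L^[n] (d, d')).1 ^ i * (L^[n] (d, d')).2 ^ j) := by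
  intro n i j
  rw [show L = affineShift τ q a from hL]
  subst hd hd'
  have hw := SemiconjBy.pow_iterate (fun _ _ h ↦ h.affineShift τ q a) n _
    (semiconjBy_affineShift_of_sq_mul h1)
  have hv := SemiconjBy.pow_iterate_left (fun _ _ h ↦ h.affineShift τ q a) n _
    (semiconjBy_affineShift_of_mul_sq h2)
  rw [Prod.pow_mk] at hw hv
  exact ⟨by rw [mul_assoc]; exact (hw.monomial i j).eq, (hv.monomial i j).eq.symm⟩
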